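/- Suppose ν > 0, Δ > 0, α ∈ (0,1), the laws of √T(m̂_T − m²) converge weakly to the Gaussian distribution N(0, ν²) as T → ∞, and ν̂_T → ν in probability. Then lim_{T→∞} P( m̂_T − Δ < ν̂_T · u_α / √T ) equals 0 if m² > Δ, equals α if m² = Δ, and equals 1 if m² < Δ. Consequently the test for 'similarity to stationarity' that rejects H_Δ : m² ≥ Δ in favour of K_Δ : m² < Δ whenever m̂_T − Δ < ν̂_T u_α/√T is a consistent asymptotic level-α test. -/

import Mathlib

/-!
With `W_T = √T (m̂_T - m²) - (ν̂_T - ν) u_α`, Slutsky's theorem gives `W_T → N(0, ν²)` in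
distribution, and for `T ≥ 1` the rejection event is `{W_T < ν u_α + √T (Δ - m²)}`. If `m² = Δ`
the threshold is the constant `ν u_α`, a continuity point of `N(0, ν²)`, so the portmanteau
theorem gives the limit `N(0, ν²)(-∞, ν u_α) = Φ(u_α) = α`. Otherwise the threshold tends to
`∓∞`, and since the limit law puts vanishing mass on far half-lines, so do the laws of `W_T`
(the portmanteau bound on closed sets), which gives the limits `0` and `1`.
-/

open MeasureTheory Filter ProbabilityTheory Set Topology

namespace MeasureTheory

variable {X : Type*} [MeasurableSpace X] [TopologicalSpace X] [OpensMeasurableSpace X]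
  {ι : Type*} {l : Filter ι}

lemma ProbabilityMeasure.tendsto_measure_zero_of_eventually_subset_isClosed
    [HasOuterApproxClosed X] {μs : ι → ProbabilityMeasure X} {μ : ProbabilityMeasure X}
    (hμs : Tendsto μs l (𝓝 μ)) {κ : Type*} {lk : Filter κ} [lk.NeBot] {F : κ → Set X}
    (hF : ∀ k, IsClosed (F k)) (hF0 : Tendsto (fun k ↦ (μ : Measure X) (F k)) lk (𝓝 0))
    {t : ι → Set X} (ht : ∀ k, ∀ᶠ i in l, t i ⊆ F k) :
    Tendsto (fun i ↦ (μs i : Measure X) (t i)) l (𝓝 0) := by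
  refine ENNReal.tendsto_nhds_zero.2 fun ε hε ↦ ?_
  obtain ⟨k, hk⟩ := (hF0.eventually_lt_const hε).exists
  filter_upwards [ht k, eventually_lt_of_limsup_lt
    ((ProbabilityMeasure.limsup_measure_closed_le_of_tendsto hμs (hF k)).trans_lt hk)]
    with i hti hi
  exact (measure_mono hti).trans hi.le

section LinearOrder

variable [LinearOrder X]

lemma tendsto_measure_Iic_atBot [ClosedIicTopology X] [NoMinOrder X]
    [(atBot : Filter X).IsCountablyGenerated] (μ : Measure X) [IsFiniteMeasure μ] :
    Tendsto (fun x ↦ μ (Iic x)) atBot (𝓝 0) := by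
  refine .of_neBot_imp fun h ↦ ?_
  have : Nonempty X := (atBot_neBot_iff.1 h).1
  have hInter := tendsto_measure_iInter_atBot (μ := μ)
    (fun _ ↦ measurableSet_Iic.nullMeasurableSet) monotone_Iic
    ⟨Classical.arbitrary X, measure_ne_top _ _⟩
  rwa [iInter_Iic_eq_empty_iff.2 (by simp), measure_empty] at hInter

lemma tendsto_measure_Ici_atTop [ClosedIciTopology X] [NoMaxOrder X]
    [(atTop : Filter X).IsCountablyGenerated] (μ : Measure X) [IsFiniteMeasure μ] :
    Tendsto (fun x ↦ μ (Ici x)) atTop (𝓝 0) :=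
  have : @IsFiniteMeasure Xᵒᵈ _ μ := ‹_›
  tendsto_measure_Iic_atBot (X := Xᵒᵈ) μ

end LinearOrder

section TendstoInDistribution

variable {Ω Ω' : Type*} {mΩ : MeasurableSpace Ω} {mΩ' : MeasurableSpace Ω'} {P : Measure Ω}
  [IsProbabilityMeasure P] {μ' : Measure Ω'} [IsProbabilityMeasure μ'] {W : ι → Ω → ℝ}
  {Z : Ω' → ℝ}

lemma tendstoInDistribution_id_of_forall_tendsto_integral {E : Type*} [TopologicalSpace E]
    {mE : MeasurableSpace E} [OpensMeasurableSpace E] {X : ι → Ω → E}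
    (hX : ∀ i, AEMeasurable (X i) P) {μ : Measure E} [IsProbabilityMeasure μ]
    (h : ∀ f : BoundedContinuousFunction E ℝ,
      Tendsto (fun i ↦ ∫ ω, f (X i ω) ∂P) l (𝓝 (∫ x, f x ∂μ))) :
    TendstoInDistribution X l id (fun _ ↦ P) μ where
  forall_aemeasurable := hX
  aemeasurable_limit := aemeasurable_id
  tendsto := by
    refine ProbabilityMeasure.tendsto_iff_forall_integral_tendsto.2 fun f ↦ ?_
    simpa [integral_map (hX _) f.continuous.aestronglyMeasurable] using h f

lemma TendstoInDistribution.measure_setOf_lt (h : TendstoInDistribution W l Z (fun _ ↦ P) μ')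
    (i : ι) (c : ℝ) : P {ω | W i ω < c} = P.map (W i) (Iio c) :=
  (Measure.map_apply_of_aemeasurable (h.forall_aemeasurable i) measurableSet_Iio).symm

lemma TendstoInDistribution.tendsto_measure_setOf_lt_of_tendsto_atBot
    (h : TendstoInDistribution W l Z (fun _ ↦ P) μ') {c : ι → ℝ} (hc : Tendsto c l atBot) :
    Tendsto (fun i ↦ P {ω | W i ω < c i}) l (𝓝 0) := by
  have := Measure.isProbabilityMeasure_map (μ := μ') h.aemeasurable_limit
  simp_rw [h.measure_setOf_lt]
  refine ProbabilityMeasure.tendsto_measure_zero_of_eventually_subset_isClosed h.tendsto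
    (fun _ ↦ isClosed_Iic) (tendsto_measure_Iic_atBot (μ'.map Z)) fun k ↦ ?_
  filter_upwards [hc.eventually_le_atBot k] with i hi
  exact Iio_subset_Iic_self.trans (Iic_subset_Iic.2 hi)

lemma TendstoInDistribution.tendsto_measure_setOf_lt_of_tendsto_atTop
    (h : TendstoInDistribution W l Z (fun _ ↦ P) μ') {c : ι → ℝ} (hc : Tendsto c l atTop) :
    Tendsto (fun i ↦ P {ω | W i ω < c i}) l (𝓝 1) := by
  have := Measure.isProbabilityMeasure_map (μ := μ') h.aemeasurable_limit
  have hIci : Tendsto (fun i ↦ P.map (W i) (Ici (c i))) l (𝓝 0) := by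
    refine ProbabilityMeasure.tendsto_measure_zero_of_eventually_subset_isClosed h.tendsto
      (fun _ ↦ isClosed_Ici) (tendsto_measure_Ici_atTop (μ'.map Z)) fun k ↦ ?_
    filter_upwards [hc.eventually_ge_atTop k] with i hi
    exact Ici_subset_Ici.2 hi
  have hsub := ENNReal.Tendsto.sub tendsto_const_nhds hIci (.inl ENNReal.one_ne_top)
  rw [tsub_zero] at hsub
  refine hsub.congr fun i ↦ ?_
  have := Measure.isProbabilityMeasure_map (μ := P) (h.forall_aemeasurable i)
  rw [h.measure_setOf_lt, ← compl_Ici, prob_compl_eq_one_sub measurableSet_Ici]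

lemma TendstoInDistribution.tendsto_measure_setOf_lt
    (h : TendstoInDistribution W l Z (fun _ ↦ P) μ') {c : ℝ} (hc : μ'.map Z {c} = 0) :
    Tendsto (fun i ↦ P {ω | W i ω < c}) l (𝓝 (μ'.map Z (Iio c))) := by
  simp_rw [h.measure_setOf_lt]
  exact ProbabilityMeasure.tendsto_measure_of_null_frontier_of_tendsto' h.tendsto
    (by simpa using hc)

end TendstoInDistribution

end MeasureTheory

namespace ProbabilityTheory

lemma gaussianReal_singleton (μ x : ℝ) {v : NNReal} (hv : v ≠ 0) : gaussianReal μ v {x} = 0 :=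
  gaussianReal_absolutelyContinuous μ hv Real.volume_singleton

lemma gaussianReal_Iio_mul {c : ℝ} (hc : 0 < c) (x : ℝ) :
    gaussianReal 0 (c ^ 2).toNNReal (Iio (c * x)) = gaussianReal 0 1 (Iio x) := by
  have hmap := gaussianReal_map_const_mul (μ := 0) (v := 1) c
  rw [mul_zero, mul_one, ← Real.toNNReal_of_nonneg] at hmap
  rw [← hmap, Measure.map_apply (measurable_const_mul c) measurableSet_Iio]
  congr 1
  ext y
  simp [mul_lt_mul_iff_of_pos_left hc]

end ProbabilityTheory

theorem similarity_to_stationarity_test_general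
    {Ω : Type*} [MeasurableSpace Ω] (P : Measure Ω) [IsProbabilityMeasure P]
    (mhat vhat : ℕ → Ω → ℝ)
    (hmeas : ∀ T, Measurable (mhat T)) (hvmeas : ∀ T, Measurable (vhat T))
    (m2 ν Δ : ℝ) (hν : 0 < ν)
    (α : ℝ)
    (hconv : ∀ f : BoundedContinuousFunction ℝ ℝ,
      Tendsto (fun T : ℕ => ∫ ω, f (Real.sqrt T * (mhat T ω - m2)) ∂P) atTop
        (nhds (∫ x, f x ∂(gaussianReal 0 (Real.toNNReal (ν ^ 2))))))
    (hvconv : TendstoInMeasure P vhat atTop (fun _ => ν))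
    (u : ℝ) (hu : ((gaussianReal 0 1) (Set.Iic u)).toReal = α) :
    (Δ < m2 →
      Tendsto (fun T : ℕ =>
          (P {ω | mhat T ω - Δ < vhat T ω * u / Real.sqrt T}).toReal)
        atTop (nhds 0))
    ∧ (m2 = Δ →
      Tendsto (fun T : ℕ =>
          (P {ω | mhat T ω - Δ < vhat T ω * u / Real.sqrt T}).toReal)
        atTop (nhds α))
    ∧ (m2 < Δ →
      Tendsto (fun T : ℕ =>
          (P {ω | mhat T ω - Δ < vhat T ω * u / Real.sqrt T}).toReal)
        atTop (nhds 1)) := by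
  set W : ℕ → Ω → ℝ := fun T ω ↦ √T * (mhat T ω - m2) - (vhat T ω - ν) * u
  have hW : TendstoInDistribution W atTop id (fun _ ↦ P) (gaussianReal 0 (ν ^ 2).toNNReal) := by
    have hX := tendstoInDistribution_id_of_forall_tendsto_integral
      (fun T ↦ (((hmeas T).sub_const m2).const_mul _).aemeasurable) hconv
    simpa [W, Function.id_def] using hX.continuous_comp_prodMk_of_tendstoInMeasure_const
      (g := fun p : ℝ × ℝ ↦ p.1 - (p.2 - ν) * u) (by fun_prop) hvconv
      fun T ↦ (hvmeas T).aemeasurable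
  have hevent : ∀ᶠ T : ℕ in atTop, {ω | mhat T ω - Δ < vhat T ω * u / √T}
      = {ω | W T ω < ν * u + √T * (Δ - m2)} := by
    filter_upwards [eventually_gt_atTop 0] with T hT
    have hsqrtT : 0 < √(T : ℝ) := Real.sqrt_pos.2 (Nat.cast_pos.2 hT)
    ext ω
    simp only [W, mem_ofPred_eq, lt_div_iff₀ hsqrtT]
    constructor <;> intro h <;> linarith
  have hlim {a : ENNReal} (ha : a ≠ ⊤)
      (h : Tendsto (fun T : ℕ ↦ P {ω | W T ω < ν * u + √T * (Δ - m2)}) atTop (𝓝 a)) :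
      Tendsto (fun T : ℕ ↦ (P {ω | mhat T ω - Δ < vhat T ω * u / √T}).toReal) atTop
        (𝓝 a.toReal) :=
    ((ENNReal.tendsto_toReal ha).comp h).congr' (hevent.mono fun T hT ↦ by simp [hT])
  have hsqrt : Tendsto (fun T : ℕ ↦ √(T : ℝ)) atTop atTop :=
    Real.tendsto_sqrt_atTop.comp tendsto_natCast_atTop_atTop
  refine ⟨fun h ↦ ?_, fun h ↦ ?_, fun h ↦ ?_⟩
  · simpa using hlim ENNReal.zero_ne_top (hW.tendsto_measure_setOf_lt_of_tendsto_atBot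
      (tendsto_atBot_add_const_left _ _ (hsqrt.atTop_mul_const_of_neg (by linarith))))
  · have hquantile : ((gaussianReal 0 (ν ^ 2).toNNReal).map id (Iio (ν * u))).toReal = α := by
      rw [Measure.map_id, gaussianReal_Iio_mul hν,
        measure_congr (Iio_ae_eq_Iic' (gaussianReal_singleton 0 u one_ne_zero)), hu]
    rw [← hquantile]
    refine hlim (measure_ne_top _ _) ?_
    simpa [h] using hW.tendsto_measure_setOf_lt (c := ν * u)
      (by simpa using gaussianReal_singleton 0 (ν * u) (by simp [hν.ne']))
  · simpa using hlim ENNReal.one_ne_top (hW.tendsto_measure_setOf_lt_of_tendsto_atTop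
      (tendsto_atTop_add_const_left _ _ (hsqrt.atTop_mul_const (by linarith))))

/-- **Test for similarity to stationarity.**  Suppose `ν > 0`, `Δ > 0`, `α ∈ (0,1)`,
the laws of `√T(m̂_T − m²)` converge weakly to `N(0, ν²)` as `T → ∞`, and `ν̂_T → ν`
in probability.  Then, with `u_α` the `α`-quantile of the standard normal
distribution, `lim_{T→∞} P(m̂_T − Δ < ν̂_T·u_α/√T)` equals `0` if `m² > Δ`, equals
`α` if `m² = Δ`, and equals `1` if `m² < Δ`.  Consequently the test rejecting
`H_Δ : m² ≥ Δ` in favour of `K_Δ : m² < Δ` whenever `m̂_T − Δ < ν̂_T u_α/√T` is a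
consistent asymptotic level-α test. -/
theorem similarity_to_stationarity_test
    {Ω : Type*} [MeasurableSpace Ω] (P : Measure Ω) [IsProbabilityMeasure P]
    (mhat vhat : ℕ → Ω → ℝ)
    (hmeas : ∀ T, Measurable (mhat T)) (hvmeas : ∀ T, Measurable (vhat T))
    (m2 ν Δ : ℝ) (hν : 0 < ν) (hΔ : 0 < Δ)
    (α : ℝ) (hα : α ∈ Set.Ioo (0 : ℝ) 1)
    (hconv : ∀ f : BoundedContinuousFunction ℝ ℝ,
      Tendsto (fun T : ℕ => ∫ ω, f (Real.sqrt T * (mhat T ω - m2)) ∂P) atTop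
        (nhds (∫ x, f x ∂(gaussianReal 0 (Real.toNNReal (ν ^ 2))))))
    (hvconv : TendstoInMeasure P vhat atTop (fun _ => ν))
    (u : ℝ) (hu : ((gaussianReal 0 1) (Set.Iic u)).toReal = α) :
    (Δ < m2 →
      Tendsto (fun T : ℕ =>
          (P {ω | mhat T ω - Δ < vhat T ω * u / Real.sqrt T}).toReal)
        atTop (nhds 0))
    ∧ (m2 = Δ →
      Tendsto (fun T : ℕ =>
          (P {ω | mhat T ω - Δ < vhat T ω * u / Real.sqrt T}).toReal)
        atTop (nhds α))
    ∧ (m2 < Δ →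
      Tendsto (fun T : ℕ =>
          (P {ω | mhat T ω - Δ < vhat T ω * u / Real.sqrt T}).toReal)
        atTop (nhds 1)) :=
  similarity_to_stationarity_test_general P mhat vhat hmeas hvmeas m2 ν Δ hν α hconv hvconv u hu
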